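/- Deviation of the SAGA estimated gradient from the full gradient at an arbitrary reference point (appendix lemma, corrected constants): Suppose Assumption 2 holds. Then for every x, y ∈ ℝ^N, every table φ = (φ_1,…,φ_m) of points of ℝ^N, and every integer A ≥ 1, E_{σ,i}[ ‖(∂Ĝ(σ,x,φ))^T ∇F_i(Ĝ(σ,x,φ)) − (∂G(y))^T ∇F_i(G(y))‖² ] ≤ 4(B_F² L_G² + B_G⁴ L_F²)·((1/A)·(1/m)∑_{j=1}^m ‖x − φ_j‖² + ‖x − y‖²). -/

import Mathlib

noncomputable section

open Finset
open scoped RealInnerProductSpace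

abbrev Euc (N : ℕ) := EuclideanSpace ℝ (Fin N)

/-- Frobenius norm of a linear map between Euclidean spaces: the square root of the
sum of the squared norms of the columns. -/
def frobNorm {N M : ℕ} (T : Euc N →L[ℝ] Euc M) : ℝ :=
  Real.sqrt (∑ j : Fin N, ‖T (EuclideanSpace.single j 1)‖ ^ 2)

/-- The averaged inner function `G = (1/m) ∑ⱼ Gⱼ`. -/
def Gbar {m N M : ℕ} (G : Fin m → Euc N → Euc M) (x : Euc N) : Euc M :=
  (m : ℝ)⁻¹ • ∑ j, G j x

/-- The averaged Jacobian `∂G = (1/m) ∑ⱼ ∂Gⱼ`. -/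
def Jbar {m N M : ℕ} (J : Fin m → Euc N → (Euc N →L[ℝ] Euc M)) (x : Euc N) :
    Euc N →L[ℝ] Euc M :=
  (m : ℝ)⁻¹ • ∑ j, J j x

/-- `Tᵀ v`: the transpose (adjoint) of `T` applied to `v`. -/
def transApp {N M : ℕ} (T : Euc N →L[ℝ] Euc M) (v : Euc M) : Euc N :=
  ContinuousLinearMap.adjoint T v

/-- Assumption 2 of the paper: bounded gradients, Lipschitz gradients, bounded
Jacobians (Frobenius norm), Lipschitz inner functions and Lipschitz Jacobians. -/
def Assumption2 {n m N M : ℕ} (G : Fin m → Euc N → Euc M)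
    (J : Fin m → Euc N → (Euc N →L[ℝ] Euc M))
    (gradF : Fin n → Euc M → Euc M) (BF LF BG LG : ℝ) : Prop :=
  (∀ i y, ‖gradF i y‖ ≤ BF) ∧
  (∀ i y y', ‖gradF i y - gradF i y'‖ ≤ LF * ‖y - y'‖) ∧
  (∀ j x, frobNorm (J j x) ≤ BG) ∧
  (∀ j x x', ‖G j x - G j x'‖ ≤ BG * ‖x - x'‖) ∧
  (∀ j x x', frobNorm (J j x - J j x') ≤ LG * ‖x - x'‖)

/-- Continuous differentiability of the data, with the prescribed Jacobians and
gradients. -/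
def SmoothData {n m N M : ℕ} (Fi : Fin n → Euc M → ℝ) (G : Fin m → Euc N → Euc M)
    (J : Fin m → Euc N → (Euc N →L[ℝ] Euc M)) (gradF : Fin n → Euc M → Euc M) : Prop :=
  (∀ j x, HasFDerivAt (G j) (J j x) x) ∧ (∀ j, Continuous (J j)) ∧
  (∀ i y, HasGradientAt (Fi i) (gradF i y) y) ∧ (∀ i, Continuous (gradF i))

/-- Uniform average over all tuples `σ ∈ {1,…,m}^A`. -/
def Esig {m A : ℕ} (f : (Fin A → Fin m) → ℝ) : ℝ :=
  (∑ σ : Fin A → Fin m, f σ) / (m ^ A : ℝ)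

/-- The SAGA estimator `Ĝ(σ,x,φ)` of the inner function. -/
def GhatSAGA {m N M : ℕ} (G : Fin m → Euc N → Euc M) {A : ℕ}
    (σ : Fin A → Fin m) (x : Euc N) (φ : Fin m → Euc N) : Euc M :=
  (A : ℝ)⁻¹ • ∑ l, (G (σ l) x - G (σ l) (φ (σ l))) + (m : ℝ)⁻¹ • ∑ j, G j (φ j)

/-- The SAGA estimator `∂Ĝ(σ,x,φ)` of the Jacobian. -/
def JhatSAGA {m N M : ℕ} (J : Fin m → Euc N → (Euc N →L[ℝ] Euc M)) {A : ℕ}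
    (σ : Fin A → Fin m) (x : Euc N) (φ : Fin m → Euc N) : Euc N →L[ℝ] Euc M :=
  (A : ℝ)⁻¹ • ∑ l, (J (σ l) x - J (σ l) (φ (σ l))) + (m : ℝ)⁻¹ • ∑ j, J j (φ j)


/-!
With `u j = G_j x - G_j (φ j)` and `w = u - mean u`, the SAGA error splits as
`Ĝ(σ,x,φ) - G(y) = A⁻¹ ∑_l w (σ l) + (G(x) - G(y))`. Since `∑ w = 0`, the cross terms
vanish in the uniform average over `σ`, so the first part has second moment
`A⁻¹ · mean ‖w‖² ≤ A⁻¹ · mean ‖u‖²`. The Jacobian estimator is handled identically after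
identifying a linear map with its tuple of columns, which turns the Frobenius norm into a
Euclidean norm. Finally the gradient error is
`(∂Ĝ - ∂G(y))ᵀ ∇F_i(Ĝ) + ∂G(y)ᵀ (∇F_i(Ĝ) - ∇F_i(G(y)))`, and `‖Tᵀ v‖ ≤ ‖T‖_F ‖v‖`.
-/

section Mean

variable {E : Type*} {m : ℕ}

def mean [AddCommGroup E] [Module ℝ E] (v : Fin m → E) : E :=
  (m : ℝ)⁻¹ • ∑ j, v j

lemma card_smul_mean [AddCommGroup E] [Module ℝ E] (v : Fin m → E) :
    (m : ℝ) • mean v = ∑ j, v j := by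
  rcases Nat.eq_zero_or_pos m with rfl | hm
  · simp
  · exact smul_inv_smul₀ (by positivity) _

lemma mean_sub [AddCommGroup E] [Module ℝ E] (v w : Fin m → E) :
    mean (fun j => v j - w j) = mean v - mean w := by
  simp only [mean, sum_sub_distrib, smul_sub]

lemma sum_sub_mean [AddCommGroup E] [Module ℝ E] (v : Fin m → E) :
    ∑ j, (v j - mean v) = 0 := by
  rw [sum_sub_distrib, sum_const, card_univ, Fintype.card_fin, ← Nat.cast_smul_eq_nsmul ℝ,
    card_smul_mean, sub_self]

lemma mean_le_of_forall_le {f : Fin m → ℝ} {C : ℝ} (hC : 0 ≤ C) (hf : ∀ j, f j ≤ C) :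
    mean f ≤ C := by
  rcases Nat.eq_zero_or_pos m with rfl | hm
  · simpa [mean] using hC
  calc mean f ≤ (m : ℝ)⁻¹ • ∑ _j : Fin m, C := by
        unfold mean; gcongr with j; exact hf j
    _ = C := by simp [smul_eq_mul, hm.ne']

lemma norm_mean_sq_le [SeminormedAddCommGroup E] [NormedSpace ℝ E] (v : Fin m → E) :
    ‖mean v‖ ^ 2 ≤ mean fun j => ‖v j‖ ^ 2 := by
  calc ‖mean v‖ ^ 2 ≤ ((m : ℝ)⁻¹ * ∑ j, ‖v j‖) ^ 2 := by
        unfold mean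
        gcongr
        rw [norm_smul, Real.norm_of_nonneg (by positivity)]
        gcongr
        exact norm_sum_le _ _
    _ ≤ (m : ℝ)⁻¹ ^ 2 * (m * ∑ j, ‖v j‖ ^ 2) := by
        rw [mul_pow]
        gcongr
        simpa using sq_sum_le_card_mul_sum_sq (s := univ) (f := fun j => ‖v j‖)
    _ = mean fun j => ‖v j‖ ^ 2 := by
        rcases Nat.eq_zero_or_pos m with rfl | hm
        · simp [mean]
        · simp only [mean, smul_eq_mul]
          field_simp

lemma norm_add_sq_le_two_mul [SeminormedAddCommGroup E] (a b : E) :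
    ‖a + b‖ ^ 2 ≤ 2 * ‖a‖ ^ 2 + 2 * ‖b‖ ^ 2 := by
  calc ‖a + b‖ ^ 2 ≤ (‖a‖ + ‖b‖) ^ 2 := by gcongr; exact norm_add_le a b
    _ ≤ 2 * ‖a‖ ^ 2 + 2 * ‖b‖ ^ 2 := by linarith [add_sq_le (a := ‖a‖) (b := ‖b‖)]

variable [NormedAddCommGroup E] [InnerProductSpace ℝ E]

lemma sum_norm_sub_mean_sq_le (v : Fin m → E) :
    ∑ j, ‖v j - mean v‖ ^ 2 ≤ ∑ j, ‖v j‖ ^ 2 := by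
  have hsplit : ∑ j, ‖v j - mean v‖ ^ 2 = ∑ j, ‖v j‖ ^ 2 - m * ‖mean v‖ ^ 2 := by
    simp_rw [norm_sub_sq_real]
    rw [sum_add_distrib, sum_sub_distrib, ← mul_sum, ← sum_inner, ← card_smul_mean v,
      real_inner_smul_left, real_inner_self_eq_norm_sq, sum_const, card_univ, Fintype.card_fin,
      nsmul_eq_mul]
    ring
  rw [hsplit]
  linarith [show (0 : ℝ) ≤ m * ‖mean v‖ ^ 2 by positivity]

end Mean

section Esig

variable {m A : ℕ}

lemma Esig_mono {f g : (Fin A → Fin m) → ℝ} (h : ∀ σ, f σ ≤ g σ) :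
    Esig f ≤ Esig g := by
  unfold Esig; gcongr with σ; exact h σ

lemma Esig_add (f g : (Fin A → Fin m) → ℝ) :
    Esig (fun σ => f σ + g σ) = Esig f + Esig g := by
  simp only [Esig, sum_add_distrib, add_div]

lemma Esig_const_mul (c : ℝ) (f : (Fin A → Fin m) → ℝ) :
    Esig (fun σ => c * f σ) = c * Esig f := by
  simp only [Esig, ← mul_sum, mul_div_assoc]

lemma Esig_const_le {c : ℝ} (hc : 0 ≤ c) : Esig (fun _ : Fin A → Fin m => c) ≤ c := by
  rcases eq_or_ne ((m : ℝ) ^ A) 0 with h | h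
  · simpa [Esig, h] using hc
  · simp [Esig, h]

variable {E : Type*} [NormedAddCommGroup E] [InnerProductSpace ℝ E]

lemma sum_norm_sq_sum_comp_of_sum_eq_zero {w : Fin m → E} (hw : ∑ j, w j = 0) (A : ℕ) :
    m * ∑ σ : Fin A → Fin m, ‖∑ l, w (σ l)‖ ^ 2 = A * m ^ A * ∑ j, ‖w j‖ ^ 2 := by
  induction A with
  | zero => simp
  | succ A ih =>
    have hfirst : ∑ σ : Fin (A + 1) → Fin m, ‖∑ l, w (σ l)‖ ^ 2
        = ∑ a, ∑ τ : Fin A → Fin m, ‖w a + ∑ l, w (τ l)‖ ^ 2 := by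
      rw [← Fintype.sum_prod_type']
      exact (Fintype.sum_equiv (Fin.consEquiv fun _ => Fin m) _ _
        fun p => by simp [Fin.consEquiv, Fin.sum_univ_succ]).symm
    have hcross : ∀ τ : Fin A → Fin m, ∑ a, ⟪w a, ∑ l, w (τ l)⟫ = 0 := fun τ => by
      rw [← sum_inner, hw, inner_zero_left]
    simp_rw [hfirst, norm_add_sq_real, sum_add_distrib, sum_comm (γ := Fin m), ← mul_sum,
      hcross, sum_const, card_univ, Fintype.card_fun, Fintype.card_fin, nsmul_eq_mul]
    rw [← mul_sum, mul_zero, mul_zero, add_zero, mul_add, mul_left_comm (m : ℝ), ih]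
    push_cast
    ring

lemma Esig_norm_sq_sum_comp {w : Fin m → E} (hw : ∑ j, w j = 0) :
    Esig (fun σ : Fin A → Fin m => ‖∑ l, w (σ l)‖ ^ 2)
      = A * mean fun j => ‖w j‖ ^ 2 := by
  rcases Nat.eq_zero_or_pos m with rfl | hm
  · have hempty (σ : Fin A → Fin 0) : ∑ l, w (σ l) = 0 :=
      sum_eq_zero fun l _ => (σ l).elim0
    simp [Esig, mean, hempty]
  · have key := sum_norm_sq_sum_comp_of_sum_eq_zero hw A
    simp only [Esig, mean, smul_eq_mul]
    field_simp
    linear_combination key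

end Esig

section SAGA

variable {X E : Type*} {m A : ℕ}

def sagaEstimate [AddCommGroup E] [Module ℝ E] (f : Fin m → X → E) (σ : Fin A → Fin m)
    (x : X) (φ : Fin m → X) : E :=
  (A : ℝ)⁻¹ • ∑ l, (f (σ l) x - f (σ l) (φ (σ l))) + mean fun j => f j (φ j)

lemma sagaEstimate_sub_mean [AddCommGroup E] [Module ℝ E] (hA : A ≠ 0) (f : Fin m → X → E)
    (σ : Fin A → Fin m) (x y : X) (φ : Fin m → X) :
    sagaEstimate f σ x φ - mean (fun j => f j y)
      = (A : ℝ)⁻¹ • ∑ l, ((f (σ l) x - f (σ l) (φ (σ l)))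
            - mean fun j => f j x - f j (φ j))
        + mean fun j => f j x - f j y := by
  have hA' : (A : ℝ) ≠ 0 := Nat.cast_ne_zero.mpr hA
  rw [sum_sub_distrib, sum_const, card_univ, Fintype.card_fin, ← Nat.cast_smul_eq_nsmul ℝ,
    smul_sub, inv_smul_smul₀ hA', mean_sub, mean_sub, sagaEstimate]
  abel

lemma Esig_norm_sq_sagaEstimate_sub_mean_le [SeminormedAddCommGroup X] [NormedAddCommGroup E]
    [InnerProductSpace ℝ E] (hA : 0 < A) {f : Fin m → X → E} {L : ℝ}
    (hf : ∀ j z z', ‖f j z - f j z'‖ ≤ L * ‖z - z'‖) (x y : X) (φ : Fin m → X) :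
    Esig (fun σ : Fin A → Fin m => ‖sagaEstimate f σ x φ - mean fun j => f j y‖ ^ 2)
      ≤ 2 * L ^ 2 * ((A : ℝ)⁻¹ * (mean fun j => ‖x - φ j‖ ^ 2) + ‖x - y‖ ^ 2) := by
  set u : Fin m → E := fun j => f j x - f j (φ j)
  set c : E := mean fun j => f j x - f j y
  have hf_sq (j z z') : ‖f j z - f j z'‖ ^ 2 ≤ L ^ 2 * ‖z - z'‖ ^ 2 := by
    rw [← mul_pow]; gcongr; exact hf j z z'
  have hu : (mean fun j => ‖u j - mean u‖ ^ 2)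
      ≤ L ^ 2 * mean fun j => ‖x - φ j‖ ^ 2 := by
    calc (mean fun j => ‖u j - mean u‖ ^ 2) ≤ mean fun j => ‖u j‖ ^ 2 := by
          exact mul_le_mul_of_nonneg_left (sum_norm_sub_mean_sq_le u) (by positivity)
      _ ≤ mean fun j => L ^ 2 * ‖x - φ j‖ ^ 2 := by
          unfold mean; gcongr with j; exact hf_sq j x (φ j)
      _ = L ^ 2 * mean fun j => ‖x - φ j‖ ^ 2 := by
          simp only [mean, smul_eq_mul, ← mul_sum]; ring
  have hc : ‖c‖ ^ 2 ≤ L ^ 2 * ‖x - y‖ ^ 2 := by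
    calc ‖c‖ ^ 2 ≤ mean fun j => ‖f j x - f j y‖ ^ 2 := norm_mean_sq_le _
      _ ≤ L ^ 2 * ‖x - y‖ ^ 2 := mean_le_of_forall_le (by positivity) fun j => hf_sq j x y
  calc Esig (fun σ : Fin A → Fin m => ‖sagaEstimate f σ x φ - mean fun j => f j y‖ ^ 2)
      = Esig fun σ : Fin A → Fin m =>
          ‖(A : ℝ)⁻¹ • ∑ l, (u (σ l) - mean u) + c‖ ^ 2 := by
        simp_rw [sagaEstimate_sub_mean hA.ne']
        rfl
    _ ≤ Esig fun σ : Fin A → Fin m =>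
          2 * ((A : ℝ)⁻¹ ^ 2 * ‖∑ l, (u (σ l) - mean u)‖ ^ 2) + 2 * ‖c‖ ^ 2 :=
        Esig_mono fun σ => by
          have := norm_add_sq_le_two_mul ((A : ℝ)⁻¹ • ∑ l, (u (σ l) - mean u)) c
          rwa [norm_smul, mul_pow, Real.norm_of_nonneg (by positivity)] at this
    _ ≤ 2 * ((A : ℝ)⁻¹ ^ 2 *
            Esig fun σ : Fin A → Fin m => ‖∑ l, (u (σ l) - mean u)‖ ^ 2)
          + 2 * ‖c‖ ^ 2 := by
        rw [Esig_add, Esig_const_mul, Esig_const_mul]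
        gcongr
        exact Esig_const_le (by positivity)
    _ = 2 * ((A : ℝ)⁻¹ * mean fun j => ‖u j - mean u‖ ^ 2) + 2 * ‖c‖ ^ 2 := by
        rw [Esig_norm_sq_sum_comp (sum_sub_mean u)]
        field_simp
    _ ≤ 2 * L ^ 2 * ((A : ℝ)⁻¹ * (mean fun j => ‖x - φ j‖ ^ 2) + ‖x - y‖ ^ 2) := by
        have := mul_le_mul_of_nonneg_left hu (inv_nonneg.mpr (Nat.cast_nonneg (α := ℝ) A))
        linarith

end SAGA

section Frobenius

variable {N M : ℕ}

def columns : (Euc N →L[ℝ] Euc M) →ₗ[ℝ] PiLp 2 (fun _ : Fin N => Euc M) where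
  toFun T := WithLp.toLp 2 fun j => T (EuclideanSpace.single j 1)
  map_add' S T := by ext j; simp
  map_smul' c T := by ext j; simp

lemma frobNorm_eq_norm_columns (T : Euc N →L[ℝ] Euc M) : frobNorm T = ‖columns T‖ := by
  rw [frobNorm, ← Real.sqrt_sq (norm_nonneg (columns T)), PiLp.norm_sq_eq_of_L2]
  rfl

lemma norm_transApp_le (T : Euc N →L[ℝ] Euc M) (v : Euc M) :
    ‖transApp T v‖ ≤ frobNorm T * ‖v‖ := by
  have hcoord (j : Fin N) : transApp T v j = ⟪T (EuclideanSpace.single j 1), v⟫ := by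
    rw [transApp, ← ContinuousLinearMap.adjoint_inner_right, EuclideanSpace.inner_single_left]
    simp
  rw [frobNorm_eq_norm_columns]
  refine le_of_sq_le_sq ?_ (by positivity)
  rw [PiLp.norm_sq_eq_of_L2, mul_pow, PiLp.norm_sq_eq_of_L2, sum_mul]
  gcongr with j
  rw [Real.norm_eq_abs, sq_abs, hcoord, ← mul_pow, ← sq_abs]
  gcongr
  exact abs_real_inner_le_norm _ _

lemma norm_sq_transApp_sub_transApp_le (S T : Euc N →L[ℝ] Euc M) (g g' : Euc M) :
    ‖transApp S g - transApp T g'‖ ^ 2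
      ≤ 2 * (frobNorm (S - T) ^ 2 * ‖g‖ ^ 2) + 2 * (frobNorm T ^ 2 * ‖g - g'‖ ^ 2) := by
  have hsplit : transApp S g - transApp T g' = transApp (S - T) g + transApp T (g - g') := by
    simp only [transApp, map_sub, sub_apply]
    abel
  rw [hsplit, ← mul_pow, ← mul_pow]
  refine (norm_add_sq_le_two_mul _ _).trans ?_
  gcongr <;> exact norm_transApp_le _ _

lemma norm_sq_transApp_comp_sub_le {S T : Euc N →L[ℝ] Euc M} {F : Euc M → Euc M}
    {BF LF BT : ℝ} (hF : ∀ v, ‖F v‖ ≤ BF)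
    (hF_lip : ∀ v v', ‖F v - F v'‖ ≤ LF * ‖v - v'‖)
    (hT : frobNorm T ^ 2 ≤ BT ^ 2) (u v : Euc M) :
    ‖transApp S (F u) - transApp T (F v)‖ ^ 2
      ≤ 2 * BF ^ 2 * frobNorm (S - T) ^ 2 + 2 * (BT ^ 2 * LF ^ 2) * ‖u - v‖ ^ 2 := by
  have hFu : ‖F u‖ ^ 2 ≤ BF ^ 2 := pow_le_pow_left₀ (norm_nonneg _) (hF u) 2
  have hFuv : ‖F u - F v‖ ^ 2 ≤ LF ^ 2 * ‖u - v‖ ^ 2 := by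
    rw [← mul_pow]; exact pow_le_pow_left₀ (norm_nonneg _) (hF_lip u v) 2
  calc _ ≤ 2 * (frobNorm (S - T) ^ 2 * ‖F u‖ ^ 2)
          + 2 * (frobNorm T ^ 2 * ‖F u - F v‖ ^ 2) :=
        norm_sq_transApp_sub_transApp_le S T (F u) (F v)
    _ ≤ 2 * (frobNorm (S - T) ^ 2 * BF ^ 2) + 2 * (BT ^ 2 * (LF ^ 2 * ‖u - v‖ ^ 2)) := by
        gcongr
    _ = _ := by ring

variable {m A : ℕ} (J : Fin m → Euc N → (Euc N →L[ℝ] Euc M))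

lemma columns_JhatSAGA (σ : Fin A → Fin m) (x : Euc N) (φ : Fin m → Euc N) :
    columns (JhatSAGA J σ x φ) = sagaEstimate (fun j z => columns (J j z)) σ x φ := by
  simp only [JhatSAGA, sagaEstimate, mean, map_add, map_smul, map_sum, map_sub]

lemma columns_Jbar (x : Euc N) : columns (Jbar J x) = mean fun j => columns (J j x) := by
  simp only [Jbar, mean, map_smul, map_sum]

lemma frobNorm_Jbar_sq_le {B : ℝ} (hJ : ∀ j x, frobNorm (J j x) ≤ B) (x : Euc N) :
    frobNorm (Jbar J x) ^ 2 ≤ B ^ 2 := by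
  rw [frobNorm_eq_norm_columns, columns_Jbar]
  refine (norm_mean_sq_le _).trans (mean_le_of_forall_le (sq_nonneg B) fun j => ?_)
  exact pow_le_pow_left₀ (norm_nonneg _) (frobNorm_eq_norm_columns (J j x) ▸ hJ j x) 2

lemma Esig_frobNorm_sq_JhatSAGA_sub_Jbar_le (hA : 0 < A) {L : ℝ}
    (hJ : ∀ j x x', frobNorm (J j x - J j x') ≤ L * ‖x - x'‖)
    (x y : Euc N) (φ : Fin m → Euc N) :
    Esig (fun σ : Fin A → Fin m => frobNorm (JhatSAGA J σ x φ - Jbar J y) ^ 2)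
      ≤ 2 * L ^ 2 * ((A : ℝ)⁻¹ * (mean fun j => ‖x - φ j‖ ^ 2) + ‖x - y‖ ^ 2) := by
  simp only [frobNorm_eq_norm_columns, map_sub, columns_JhatSAGA, columns_Jbar]
  exact Esig_norm_sq_sagaEstimate_sub_mean_le hA
    (fun j z z' => by simpa only [frobNorm_eq_norm_columns, map_sub] using hJ j z z') x y φ

end Frobenius

theorem saga_gradient_deviation_reference_bound_general
    {n m N M A : ℕ} (hA : 0 < A)
    (BF LF BG LG : ℝ)
    (G : Fin m → Euc N → Euc M)
    (J : Fin m → Euc N → (Euc N →L[ℝ] Euc M)) (gradF : Fin n → Euc M → Euc M)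
    (hA2 : Assumption2 G J gradF BF LF BG LG)
    (x y : Euc N) (φ : Fin m → Euc N) :
    (n : ℝ)⁻¹ * ∑ i, Esig (fun σ : Fin A → Fin m =>
        ‖transApp (JhatSAGA J σ x φ) (gradF i (GhatSAGA G σ x φ)) -
          transApp (Jbar J y) (gradF i (Gbar G y))‖ ^ 2)
      ≤ 4 * (BF ^ 2 * LG ^ 2 + BG ^ 4 * LF ^ 2) *
          ((1 / (A : ℝ)) * ((m : ℝ)⁻¹ * ∑ j, ‖x - φ j‖ ^ 2) + ‖x - y‖ ^ 2) := by
  obtain ⟨hgrad, hgrad_lip, hJ, hG_lip, hJ_lip⟩ := hA2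
  rw [one_div]
  set K := (A : ℝ)⁻¹ * ((m : ℝ)⁻¹ * ∑ j, ‖x - φ j‖ ^ 2) + ‖x - y‖ ^ 2
  have hEG : Esig (fun σ : Fin A → Fin m => ‖GhatSAGA G σ x φ - Gbar G y‖ ^ 2)
      ≤ 2 * BG ^ 2 * K :=
    Esig_norm_sq_sagaEstimate_sub_mean_le hA hG_lip x y φ
  have hEJ : Esig (fun σ : Fin A → Fin m => frobNorm (JhatSAGA J σ x φ - Jbar J y) ^ 2)
      ≤ 2 * LG ^ 2 * K :=
    Esig_frobNorm_sq_JhatSAGA_sub_Jbar_le J hA hJ_lip x y φ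
  refine mean_le_of_forall_le (by positivity) fun i => ?_
  calc _ ≤ Esig fun σ : Fin A → Fin m =>
          2 * BF ^ 2 * frobNorm (JhatSAGA J σ x φ - Jbar J y) ^ 2
          + 2 * (BG ^ 2 * LF ^ 2) * ‖GhatSAGA G σ x φ - Gbar G y‖ ^ 2 :=
        Esig_mono fun σ => norm_sq_transApp_comp_sub_le (hgrad i) (hgrad_lip i)
          (frobNorm_Jbar_sq_le J hJ y) _ _
    _ ≤ 2 * BF ^ 2 * (2 * LG ^ 2 * K) + 2 * (BG ^ 2 * LF ^ 2) * (2 * BG ^ 2 * K) := by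
        rw [Esig_add, Esig_const_mul, Esig_const_mul]
        gcongr
    _ = _ := by ring

/-- Deviation of the SAGA estimated gradient from the full gradient at an arbitrary
reference point (corrected constants). -/
theorem saga_gradient_deviation_reference_bound
    {n m N M A : ℕ} (hn : 0 < n) (hm : 0 < m) (hA : 0 < A)
    (BF LF BG LG : ℝ) (hBF : 0 < BF) (hLF : 0 < LF) (hBG : 0 < BG) (hLG : 0 < LG)
    (Fi : Fin n → Euc M → ℝ) (G : Fin m → Euc N → Euc M)
    (J : Fin m → Euc N → (Euc N →L[ℝ] Euc M)) (gradF : Fin n → Euc M → Euc M)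
    (hsm : SmoothData Fi G J gradF)
    (hA2 : Assumption2 G J gradF BF LF BG LG)
    (x y : Euc N) (φ : Fin m → Euc N) :
    (n : ℝ)⁻¹ * ∑ i, Esig (fun σ : Fin A → Fin m =>
        ‖transApp (JhatSAGA J σ x φ) (gradF i (GhatSAGA G σ x φ)) -
          transApp (Jbar J y) (gradF i (Gbar G y))‖ ^ 2)
      ≤ 4 * (BF ^ 2 * LG ^ 2 + BG ^ 4 * LF ^ 2) *
          ((1 / (A : ℝ)) * ((m : ℝ)⁻¹ * ∑ j, ‖x - φ j‖ ^ 2) + ‖x - y‖ ^ 2) :=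
  saga_gradient_deviation_reference_bound_general hA BF LF BG LG G J gradF hA2 x y φ
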